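/- arXiv:1805.02234 — 3 statements merged into one kernel-verified Lean document; each statement's English description precedes it below -/
import Mathlib

section
/- Let d ≥ 1, let λ be a σ-finite measure on ℝ^d, let Θ ⊆ ℝ^d, and let A : ℝ^d → ℝ satisfy ∫ exp(⟪θ,x⟫) dλ(x) = exp(A(θ)) for every θ ∈ Θ. For θ ∈ Θ and a finite sequence x^k = (x_1,…,x_k) in ℝ^d write L(θ, x^k) = ∏_{i=1}^k exp(⟪θ,x_i⟫ − A(θ)). Let h : ℝ^d → Θ be a map (the maximum-likelihood map, applied to the sample average), and let π : Θ → [0,∞) be a prior density with respect to Lebesgue measure on Θ. Fix natural numbers m < n. Assume that for every sequence x^n = (x_1,…,x_n) ∈ (ℝ^d)^n the Bayesian predictive density equals the CNML predictive density, i.e. (∫_Θ L(θ,(x_{m+1},…,x_n)) · L(θ,(x_1,…,x_m)) · π(θ) dθ) / (∫_Θ L(θ,(x_1,…,x_m)) · π(θ) dθ) = L(h(x̄_n), x^n) / (∫_{(ℝ^d)^{n−m}} L(h(avg(x_1,…,x_m,y_1,…,y_{n−m})), (x_1,…,x_m,y_1,…,y_{n−m})) dλ^{⊗(n−m)}(y)),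 where x̄_n = (1/n)∑_{i=1}^n x_i and avg denotes the average of the concatenated sequence, and assume all the integrals appearing are finite and all the denominators (including L(h(x̄_n), x^n)) are strictly positive. Then there exists a constant C such that for every x^n ∈ (ℝ^d)^n one has ∫_Θ (L(θ,x^n) / L(h(x̄_n),x^n)) · π(θ) dθ = C. -/
open MeasureTheory RealInnerProductSpace

/-- The iid likelihood of a parameter `θ` of a natural exponential family with cumulant
generating function `A`, given a finite sample `x = (x 1, …, x k)`:
`L A θ x = ∏ i, exp (⟪θ, x i⟫ - A θ)`. -/
noncomputable def expFamLikelihood {d : ℕ} (A : EuclideanSpace ℝ (Fin d) → ℝ)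
    (θ : EuclideanSpace ℝ (Fin d)) {k : ℕ} (x : Fin k → EuclideanSpace ℝ (Fin d)) : ℝ :=
  ∏ i, Real.exp (⟪θ, x i⟫ - A θ)

/-- The average of a finite sequence in `ℝ^d`. -/
noncomputable def seqAvg {d k : ℕ} (x : Fin k → EuclideanSpace ℝ (Fin d)) :
    EuclideanSpace ℝ (Fin d) :=
  (k : ℝ)⁻¹ • ∑ i, x i

lemma expFamLikelihood_eq_sum {d : ℕ} (A : EuclideanSpace ℝ (Fin d) → ℝ)
    (θ : EuclideanSpace ℝ (Fin d)) {k : ℕ} (x : Fin k → EuclideanSpace ℝ (Fin d)) :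
    expFamLikelihood A θ x = Real.exp (⟪θ, ∑ i, x i⟫ - (k : ℝ) * A θ) := by
  unfold expFamLikelihood
  rw [← Real.exp_sum]
  congr 1
  rw [Finset.sum_sub_distrib, inner_sum]
  simp [Finset.card_univ, nsmul_eq_mul]

/-- If, for a natural exponential family with parameter set `Θ` and cumulant generating
function `A` over a σ-finite measure `lam` on `ℝ^d` (`d ≥ 1`), the Bayesian predictive
density with prior density `π` coincides with the conditional normalized maximum
likelihood (CNML) predictive density for predicting the last `k ≥ 1` observations of a
sample of size `m + k` from the first `m` (with all relevant integrals finite and all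
denominators positive, `h` being the maximum-likelihood map applied to the sample
average), then `∫_Θ (L(θ, x) / L(h(x̄), x)) π(θ) dθ` is a constant independent of the data
sequence `x` of length `m + k`. -/
theorem bayes_eq_cnml_implies_normalizer_const {d : ℕ} (hd : 1 ≤ d)
    (lam : Measure (EuclideanSpace ℝ (Fin d))) [SigmaFinite lam]
    (Θ : Set (EuclideanSpace ℝ (Fin d))) (A : EuclideanSpace ℝ (Fin d) → ℝ)
    (hA : ∀ θ ∈ Θ, (∫ x, Real.exp ⟪θ, x⟫ ∂lam) = Real.exp (A θ))
    (h : EuclideanSpace ℝ (Fin d) → EuclideanSpace ℝ (Fin d)) (hh : ∀ x, h x ∈ Θ)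
    (π : EuclideanSpace ℝ (Fin d) → ℝ) (hπ : ∀ θ ∈ Θ, 0 ≤ π θ)
    (m k : ℕ) (hk : 1 ≤ k)
    (hint1 : ∀ x : Fin (m + k) → EuclideanSpace ℝ (Fin d),
      IntegrableOn (fun θ => expFamLikelihood A θ x * π θ) Θ volume)
    (hint2 : ∀ x : Fin m → EuclideanSpace ℝ (Fin d),
      IntegrableOn (fun θ => expFamLikelihood A θ x * π θ) Θ volume)
    (hint3 : ∀ x : Fin (m + k) → EuclideanSpace ℝ (Fin d),
      IntegrableOn
        (fun θ => expFamLikelihood A θ x / expFamLikelihood A (h (seqAvg x)) x * π θ)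
        Θ volume)
    (hint4 : ∀ x : Fin m → EuclideanSpace ℝ (Fin d),
      Integrable
        (fun y : Fin k → EuclideanSpace ℝ (Fin d) =>
          expFamLikelihood A (h (seqAvg (Fin.append x y))) (Fin.append x y))
        (Measure.pi fun _ : Fin k => lam))
    (hpos1 : ∀ x : Fin m → EuclideanSpace ℝ (Fin d),
      0 < ∫ θ in Θ, expFamLikelihood A θ x * π θ)
    (hpos2 : ∀ x : Fin m → EuclideanSpace ℝ (Fin d),
      0 < ∫ y : Fin k → EuclideanSpace ℝ (Fin d),
        expFamLikelihood A (h (seqAvg (Fin.append x y))) (Fin.append x y)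
          ∂(Measure.pi fun _ : Fin k => lam))
    (hpos3 : ∀ x : Fin (m + k) → EuclideanSpace ℝ (Fin d),
      0 < expFamLikelihood A (h (seqAvg x)) x)
    (heq : ∀ (x : Fin m → EuclideanSpace ℝ (Fin d))
        (z : Fin k → EuclideanSpace ℝ (Fin d)),
      (∫ θ in Θ, expFamLikelihood A θ z * expFamLikelihood A θ x * π θ) /
          (∫ θ in Θ, expFamLikelihood A θ x * π θ) =
        expFamLikelihood A (h (seqAvg (Fin.append x z))) (Fin.append x z) /
          ∫ y : Fin k → EuclideanSpace ℝ (Fin d),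
            expFamLikelihood A (h (seqAvg (Fin.append x y))) (Fin.append x y)
              ∂(Measure.pi fun _ : Fin k => lam)) :
    ∃ C : ℝ, ∀ x : Fin (m + k) → EuclideanSpace ℝ (Fin d),
      (∫ θ in Θ,
        expFamLikelihood A θ x / expFamLikelihood A (h (seqAvg x)) x * π θ) = C := by

  classical
  set T : (Fin (m + k) → EuclideanSpace ℝ (Fin d)) → ℝ := fun w =>
    ∫ θ in Θ, expFamLikelihood A θ w / expFamLikelihood A (h (seqAvg w)) w * π θ with hT
  have hk0 : (k : ℝ) ≠ 0 := Nat.cast_ne_zero.mpr (by omega)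
  -- append splits the likelihood
  have hLapp : ∀ (θ : EuclideanSpace ℝ (Fin d)) (x : Fin m → EuclideanSpace ℝ (Fin d)) (z : Fin k → EuclideanSpace ℝ (Fin d)),
      expFamLikelihood A θ (Fin.append x z)
        = expFamLikelihood A θ z * expFamLikelihood A θ x := by
    intro θ x z
    rw [expFamLikelihood_eq_sum, expFamLikelihood_eq_sum, expFamLikelihood_eq_sum,
      ← Real.exp_add]
    congr 1
    have hs : ∑ i, Fin.append x z i = ∑ i, x i + ∑ i, z i := by
      rw [Fin.sum_univ_add]
      simp
    rw [hs, inner_add_right]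
    push_cast
    ring
  -- T depends only on the sum
  have hFsum : ∀ (w w' : Fin (m + k) → EuclideanSpace ℝ (Fin d)), (∑ i, w i) = (∑ i, w' i) → T w = T w' := by
    intro w w' hs
    have havg : seqAvg w = seqAvg w' := by unfold seqAvg; rw [hs]
    have hL : ∀ θ : EuclideanSpace ℝ (Fin d), expFamLikelihood A θ w = expFamLikelihood A θ w' := fun θ => by
      rw [expFamLikelihood_eq_sum, expFamLikelihood_eq_sum, hs]
    simp only [hT]
    refine integral_congr_ae (Filter.Eventually.of_forall fun θ => ?_)
    simp only [hL, havg]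
  -- dividing out the constant
  have hdiv : ∀ w : Fin (m + k) → EuclideanSpace ℝ (Fin d),
      T w = (∫ θ in Θ, expFamLikelihood A θ w * π θ)
          / expFamLikelihood A (h (seqAvg w)) w := by
    intro w
    simp only [hT]
    simp_rw [div_eq_mul_inv, mul_right_comm]
    rw [integral_mul_const]
  -- key: T on an appended sequence equals D/N for the prefix
  have key : ∀ (x : Fin m → EuclideanSpace ℝ (Fin d)) (z : Fin k → EuclideanSpace ℝ (Fin d)),
      T (Fin.append x z) = (∫ θ in Θ, expFamLikelihood A θ x * π θ)
        / ∫ y : Fin k → EuclideanSpace ℝ (Fin d),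
            expFamLikelihood A (h (seqAvg (Fin.append x y))) (Fin.append x y)
              ∂(Measure.pi fun _ : Fin k => lam) := by
    intro x z
    rw [hdiv]
    have hI : (∫ θ in Θ, expFamLikelihood A θ (Fin.append x z) * π θ)
        = ∫ θ in Θ, expFamLikelihood A θ z * expFamLikelihood A θ x * π θ := by
      refine integral_congr_ae (Filter.Eventually.of_forall fun θ => ?_)
      simp only [hLapp]
    rw [hI]
    have hD := (hpos1 x).ne'
    have hN := (hpos2 x).ne'
    have hL := (hpos3 (Fin.append x z)).ne'
    have h2 := heq x z
    rw [div_eq_div_iff hD hN] at h2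
    rw [div_eq_div_iff hL hN]
    linarith
  -- decompose any sequence
  have hsplit : ∀ w : Fin (m + k) → EuclideanSpace ℝ (Fin d),
      w = Fin.append (fun i => w (Fin.castAdd k i)) (fun i => w (Fin.natAdd m i)) := by
    intro w
    funext i
    refine Fin.addCases (fun j => ?_) (fun j => ?_) i <;> simp
  -- the cancelling suffix
  set zc : (Fin m → EuclideanSpace ℝ (Fin d)) → (Fin k → EuclideanSpace ℝ (Fin d)) := fun x _ => -((k : ℝ)⁻¹ • ∑ i, x i) with hzc
  have hzero : ∀ x : Fin m → EuclideanSpace ℝ (Fin d), (∑ i, Fin.append x (zc x) i) = 0 := by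
    intro x
    rw [Fin.sum_univ_add]
    simp only [Fin.append_left, Fin.append_right, hzc]
    rw [Finset.sum_const, Finset.card_univ, Fintype.card_fin]
    rw [smul_neg, ← Nat.cast_smul_eq_nsmul ℝ, smul_smul, mul_inv_cancel₀ hk0, one_smul,
      add_neg_cancel]
  refine ⟨T (Fin.append (fun _ : Fin m => (0 : EuclideanSpace ℝ (Fin d))) (zc fun _ => 0)), fun w => ?_⟩
  calc T w = T (Fin.append (fun i => w (Fin.castAdd k i)) (fun i => w (Fin.natAdd m i))) := by
        rw [← hsplit]
    _ = T (Fin.append (fun i => w (Fin.castAdd k i)) (zc fun i => w (Fin.castAdd k i))) := by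
        rw [key, key]
    _ = T (Fin.append (fun _ : Fin m => (0 : EuclideanSpace ℝ (Fin d))) (zc fun _ => 0)) := by
        refine hFsum _ _ ?_
        rw [hzero, hzero]
end

section
/- Let F : ℝ^d → ℝ be a function that is equal to its own convex conjugate: F(x) = sup_{y ∈ ℝ^d} (⟪x,y⟫ − F(y)) for all x ∈ ℝ^d. Then F(x) = (1/2)‖x‖² for all x ∈ ℝ^d. -/
open RealInnerProductSpace

/-- (Moreau) The only real-valued self-conjugated function on `ℝ^d` is half the squared
norm: if `F : ℝ^d → ℝ` equals its own convex conjugate, i.e.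
`F x = ⨆ y, (⟪x, y⟫ - F y)` for all `x`, then `F x = ‖x‖² / 2` for all `x`. -/
theorem selfConjugate_eq_half_sq_norm {d : ℕ} (F : EuclideanSpace ℝ (Fin d) → ℝ)
    (hF : ∀ x : EuclideanSpace ℝ (Fin d),
      (F x : EReal) = ⨆ y : EuclideanSpace ℝ (Fin d), ((⟪x, y⟫ - F y : ℝ) : EReal)) :
    ∀ x : EuclideanSpace ℝ (Fin d), F x = (1 / 2) * ‖x‖ ^ 2 := by
  have hlow : ∀ x : EuclideanSpace ℝ (Fin d), (1 / 2) * ‖x‖ ^ 2 ≤ F x := by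
    intro x
    have h : ((⟪x, x⟫ - F x : ℝ) : EReal) ≤ (F x : EReal) := by
      rw [hF x]
      exact le_iSup (fun y => ((⟪x, y⟫ - F y : ℝ) : EReal)) x
    have h' : (⟪x, x⟫ - F x : ℝ) ≤ F x := by exact_mod_cast h
    have hx : ⟪x, x⟫ = ‖x‖ ^ 2 := real_inner_self_eq_norm_sq x
    linarith [hx ▸ h']
  intro x
  have hup : (F x : EReal) ≤ (((1 / 2) * ‖x‖ ^ 2 : ℝ) : EReal) := by
    rw [hF x]
    apply iSup_le
    intro y
    have h1 : ⟪x, y⟫ ≤ ‖x‖ * ‖y‖ := real_inner_le_norm x y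
    have h2 : (1 / 2) * ‖y‖ ^ 2 ≤ F y := hlow y
    have : (⟪x, y⟫ - F y : ℝ) ≤ (1 / 2) * ‖x‖ ^ 2 := by nlinarith [sq_nonneg (‖x‖ - ‖y‖)]
    exact_mod_cast this
  have hup' : F x ≤ (1 / 2) * ‖x‖ ^ 2 := by exact_mod_cast hup
  linarith [hlow x]
end

section
/- Let α > 0, β > 0, m ≥ 1 and q > 0. Then the Γ(mα, mβ)-measure of the set {x > 0 : β·x ≤ q} equals the Γ(mα, m)-measure of (0, q]. Consequently, if F denotes the cumulative distribution function of Γ(mα, m) and q satisfies F(q) = 1 − ã for some 0 < ã < 1, then the probability under X̄ ∼ Γ(mα, mβ) that β lies in the interval [0, q/X̄] equals 1 − ã; i.e. the Bayesian 1−ã credible interval [0, q/x̄] is also a frequentist 1−ã confidence interval for the rate β of the Gamma family with known shape α. -/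
/-!
If `X ∼ Γ(a, r c)` then `c X ∼ Γ(a, r)`, so `P(β X̄ ≤ q)` under `Γ(m α, m β)` is the
`Γ(m α, m)`-probability of `(0, q]`, which is `F q`. Since gamma measures live on `(0, ∞)`,
the event `β ∈ [0, q / X̄]` is almost surely the event `β X̄ ≤ q`.
-/

open MeasureTheory ProbabilityTheory

/-- CDF of the gamma distribution (removed from Mathlib; old definition restored). -/
noncomputable def gammaCDFReal (a r : ℝ) : StieltjesFunction ℝ :=
  cdf (gammaMeasure a r)

open Set

namespace ProbabilityTheory

lemma gammaPDF_mul_rate (a : ℝ) {r c : ℝ} (hr : 0 ≤ r) (hc : 0 < c) (x : ℝ) :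
    gammaPDF a (r * c) x = ENNReal.ofReal c * gammaPDF a r (c * x) := by
  rcases lt_or_ge x 0 with hx | hx
  · rw [gammaPDF_of_neg hx, gammaPDF_of_neg (mul_neg_of_pos_of_neg hc hx), mul_zero]
  rw [gammaPDF_of_nonneg hx, gammaPDF_of_nonneg (by positivity), ← ENNReal.ofReal_mul hc.le,
    Real.mul_rpow hr hc.le, Real.mul_rpow hc.le hx, Real.rpow_sub hc, Real.rpow_one,
    ← mul_assoc r c x]
  congr 1
  field_simp

lemma gammaMeasure_map_const_mul (a : ℝ) {r c : ℝ} (hr : 0 ≤ r) (hc : 0 < c) :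
    (gammaMeasure a (r * c)).map (c * ·) = gammaMeasure a r := by
  ext s hs
  have hmul : Measurable (c * · : ℝ → ℝ) := measurable_const_mul c
  rw [Measure.map_apply hmul hs, gammaMeasure, gammaMeasure, withDensity_apply _ (hmul hs),
    withDensity_apply _ hs]
  calc ∫⁻ x in (c * ·) ⁻¹' s, gammaPDF a (r * c) x
      = ENNReal.ofReal c * ∫⁻ x in (c * ·) ⁻¹' s, gammaPDF a r (c * x) := by
        simp_rw [gammaPDF_mul_rate a hr hc]
        exact lintegral_const_mul' _ _ ENNReal.ofReal_ne_top
    _ = ENNReal.ofReal c * ∫⁻ y in s, gammaPDF a r y ∂volume.map (c * ·) := by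
        rw [setLIntegral_map (f := gammaPDF a r) hs (measurable_gammaPDFReal a r).ennreal_ofReal hmul]
    _ = ∫⁻ y in s, gammaPDF a r y := by
        rw [Real.map_volume_mul_left hc.ne', Measure.restrict_smul, lintegral_smul_measure,
          smul_eq_mul, ← mul_assoc, abs_of_pos (inv_pos.mpr hc), ← ENNReal.ofReal_mul hc.le,
          mul_inv_cancel₀ hc.ne', ENNReal.ofReal_one, one_mul]

lemma gammaMeasure_Iic_zero (a r : ℝ) : gammaMeasure a r (Iic 0) = 0 := by
  rw [gammaMeasure, withDensity_apply _ measurableSet_Iic,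
    lintegral_Iic_eq_lintegral_Iio_add_Icc _ le_rfl, lintegral_gammaPDF_of_nonpos le_rfl,
    zero_add, Icc_self, Measure.restrict_singleton, Real.volume_singleton, zero_smul,
    lintegral_zero_measure]

lemma gammaMeasure_congr_of_pos (a r : ℝ) {s t : Set ℝ}
    (hst : ∀ x, 0 < x → (x ∈ s ↔ x ∈ t)) : gammaMeasure a r s = gammaMeasure a r t := by
  refine measure_congr ?_
  have hpos : ∀ᵐ x ∂gammaMeasure a r, 0 < x :=
    ae_iff.2 (by simp only [not_lt]; exact gammaMeasure_Iic_zero a r)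
  filter_upwards [hpos] with x hx
  exact propext (hst x hx)

lemma gammaMeasure_Ioc_zero {a r : ℝ} (ha : 0 < a) (hr : 0 < r) (q : ℝ) :
    gammaMeasure a r (Ioc 0 q) = ENNReal.ofReal (cdf (gammaMeasure a r) q) := by
  have := isProbabilityMeasure_gammaMeasure ha hr
  rw [cdf_eq_real, measureReal_def, ENNReal.ofReal_toReal (measure_ne_top _ _)]
  exact gammaMeasure_congr_of_pos a r fun x hx => by simp [hx]

end ProbabilityTheory

theorem gamma_credible_eq_confidence_general (m : ℕ) (hm : 1 ≤ m) (α β q : ℝ)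
    (hα : 0 < α) (hβ : 0 < β) :
    gammaMeasure ((m : ℝ) * α) ((m : ℝ) * β) {x : ℝ | 0 < x ∧ β * x ≤ q} =
      gammaMeasure ((m : ℝ) * α) (m : ℝ) (Set.Ioc 0 q) ∧
    ∀ at_ : ℝ, 0 < at_ → at_ < 1 →
      gammaCDFReal ((m : ℝ) * α) (m : ℝ) q = 1 - at_ →
      gammaMeasure ((m : ℝ) * α) ((m : ℝ) * β) {x : ℝ | β ∈ Set.Icc 0 (q / x)} =
        ENNReal.ofReal (1 - at_) := by
  have hm₀ : (0 : ℝ) < m := by exact_mod_cast hm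
  have hscale : gammaMeasure (m * α) (m * β) {x | 0 < x ∧ β * x ≤ q} =
      gammaMeasure (m * α) m (Ioc 0 q) := by
    rw [← gammaMeasure_map_const_mul _ hm₀.le hβ,
      Measure.map_apply (measurable_const_mul β) measurableSet_Ioc]
    congr 1
    ext x
    simp [mul_pos_iff_of_pos_left hβ]
  refine ⟨hscale, fun at_ _ _ hF => ?_⟩
  rw [gammaMeasure_congr_of_pos _ _ (t := {x | 0 < x ∧ β * x ≤ q}), hscale,
    gammaMeasure_Ioc_zero (by positivity) hm₀, ← gammaCDFReal, hF]
  intro x hx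
  simp [le_div_iff₀ hx, hβ.le, hx]

/-- The `Γ(m α, m β)`-measure of `{x > 0 : β x ≤ q}` equals the `Γ(m α, m)`-measure of
`(0, q]`.  Consequently, if `F` is the CDF of `Γ(m α, m)` and `F q = 1 - at_`, then the
probability under `X̄ ∼ Γ(m α, m β)` that `β ∈ [0, q / X̄]` equals `1 - at_`: the Bayesian
`1 - at_` credible interval `[0, q / x̄]` is also a frequentist `1 - at_` confidence interval
for the rate `β` of the Gamma family with known shape `α`. -/
theorem gamma_credible_eq_confidence (m : ℕ) (hm : 1 ≤ m) (α β q : ℝ)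
    (hα : 0 < α) (hβ : 0 < β) (hq : 0 < q) :
    gammaMeasure ((m : ℝ) * α) ((m : ℝ) * β) {x : ℝ | 0 < x ∧ β * x ≤ q} =
      gammaMeasure ((m : ℝ) * α) (m : ℝ) (Set.Ioc 0 q) ∧
    ∀ at_ : ℝ, 0 < at_ → at_ < 1 →
      gammaCDFReal ((m : ℝ) * α) (m : ℝ) q = 1 - at_ →
      gammaMeasure ((m : ℝ) * α) ((m : ℝ) * β) {x : ℝ | β ∈ Set.Icc 0 (q / x)} =
        ENNReal.ofReal (1 - at_) :=
  gamma_credible_eq_confidence_general m hm α β q hα hβ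
end
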